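/- Let Ω: X ↷ Y be 1-quasilinear with dense domain. Then Ran Ω* = (Dom Ω)* and Dom Ω* = (Ran Ω)*. -/
import Mathlib
set_option linter.unusedSectionVars false
set_option linter.unusedVariables false
set_option maxHeartbeats 1000000


noncomputable section

open scoped Classical BigOperators

section Defs

variable {X Y S : Type*} [NormedAddCommGroup X] [NormedSpace ℝ X]
  [NormedAddCommGroup Y] [NormedSpace ℝ Y] [AddCommGroup S] [Module ℝ S]

/-- The norm of `σ ∈ S` viewed as an element of `Y` through the embedding `ι`
(junk value `0` if `σ` is not in the image of `Y`). -/
noncomputable def Ynorm (ι : Y →ₗ[ℝ] S) (σ : S) : ℝ :=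
  if h : ∃ y : Y, ι y = σ then ‖Classical.choose h‖ else 0

/-- `Ω : X ↷ Y` is quasilinear with ambient space `S` and constant `C`. -/
def IsQL (ι : Y →ₗ[ℝ] S) (Ω : X → S) (C : ℝ) : Prop :=
  (∀ (c : ℝ) (x : X), Ω (c • x) = c • Ω x) ∧
  ∀ x z : X, (∃ y : Y, ι y = Ω (x + z) - Ω x - Ω z) ∧
    Ynorm ι (Ω (x + z) - Ω x - Ω z) ≤ C * (‖x‖ + ‖z‖)

/-- `Ω : X ↷ Y` is `1`-quasilinear with ambient space `S` and constant `C`. -/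
def IsOneQL (ι : Y →ₗ[ℝ] S) (Ω : X → S) (C : ℝ) : Prop :=
  (∀ (c : ℝ) (x : X), Ω (c • x) = c • Ω x) ∧
  ∀ (n : ℕ) (f : Fin n → X),
    (∃ y : Y, ι y = Ω (∑ i, f i) - ∑ i, Ω (f i)) ∧
      Ynorm ι (Ω (∑ i, f i) - ∑ i, Ω (f i)) ≤ C * ∑ i, ‖f i‖

/-- The twisted sum `Y ⊕_Ω X = {(β, x) : β - Ωx ∈ Y}`, as a subset of `S × X`. -/
def TwSum (ι : Y →ₗ[ℝ] S) (Ω : X → S) : Set (S × X) :=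
  {p | ∃ y : Y, ι y = p.1 - Ω p.2}

/-- The quasinorm `‖(β, x)‖_Ω = ‖β - Ωx‖_Y + ‖x‖_X` of the twisted sum. -/
noncomputable def tnorm (ι : Y →ₗ[ℝ] S) (Ω : X → S) (p : S × X) : ℝ :=
  Ynorm ι (p.1 - Ω p.2) + ‖p.2‖

/-- `Dom Ω = {x ∈ X : Ωx ∈ Y}`. -/
def QDom (ι : Y →ₗ[ℝ] S) (Ω : X → S) : Set X :=
  {x | ∃ y : Y, ι y = Ω x}

/-- `‖x‖_D = ‖x‖_X + ‖Ωx‖_Y`. -/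
noncomputable def domNorm (ι : Y →ₗ[ℝ] S) (Ω : X → S) (x : X) : ℝ :=
  ‖x‖ + Ynorm ι (Ω x)

/-- `Ran Ω = {β ∈ S : ∃ x ∈ X, β - Ωx ∈ Y}`. -/
def QRan (ι : Y →ₗ[ℝ] S) (Ω : X → S) : Set S :=
  {σ | ∃ x : X, (σ, x) ∈ TwSum ι Ω}

/-- `‖β‖_R = inf {‖(β, x)‖_Ω : (β, x) ∈ Y ⊕_Ω X}`. -/
noncomputable def ranNorm (ι : Y →ₗ[ℝ] S) (Ω : X → S) (σ : S) : ℝ :=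
  sInf (tnorm ι Ω '' {p : S × X | p.1 = σ ∧ p ∈ TwSum ι Ω})

end Defs

section Aux

variable {X Y S : Type*} [NormedAddCommGroup X] [NormedSpace ℝ X]
  [NormedAddCommGroup Y] [NormedSpace ℝ Y] [AddCommGroup S] [Module ℝ S]
  {ι : Y →ₗ[ℝ] S} {Ω : X → S} {C : ℝ}

lemma Ynorm_eq (hinj : Function.Injective ι) {y : Y} {σ : S} (h : ι y = σ) :
    Ynorm ι σ = ‖y‖ := by
  have hex : ∃ y' : Y, ι y' = σ := ⟨y, h⟩
  rw [Ynorm, dif_pos hex]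
  have : Classical.choose hex = y := hinj ((Classical.choose_spec hex).trans h.symm)
  rw [this]

lemma Ynorm_nonneg (ι : Y →ₗ[ℝ] S) (σ : S) : 0 ≤ Ynorm ι σ := by
  rw [Ynorm]; split <;> simp [norm_nonneg]

lemma Ynorm_zero (hinj : Function.Injective ι) : Ynorm ι (0 : S) = 0 := by
  rw [Ynorm_eq hinj (map_zero ι)]; simp

lemma Ynorm_add_le (hinj : Function.Injective ι) {σ τ : S}
    (h1 : ∃ y : Y, ι y = σ) (h2 : ∃ y : Y, ι y = τ) :
    Ynorm ι (σ + τ) ≤ Ynorm ι σ + Ynorm ι τ := by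
  obtain ⟨y1, hy1⟩ := h1; obtain ⟨y2, hy2⟩ := h2
  rw [Ynorm_eq hinj hy1, Ynorm_eq hinj hy2,
    Ynorm_eq hinj (show ι (y1 + y2) = σ + τ by rw [map_add, hy1, hy2])]
  exact norm_add_le _ _

lemma Ynorm_sum_le (hinj : Function.Injective ι) {n : ℕ} {σ : Fin n → S}
    (h : ∀ i, ∃ y : Y, ι y = σ i) :
    Ynorm ι (∑ i, σ i) ≤ ∑ i, Ynorm ι (σ i) := by
  choose y hy using h
  have : ι (∑ i, y i) = ∑ i, σ i := by rw [map_sum]; exact Finset.sum_congr rfl fun i _ => hy i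
  rw [Ynorm_eq hinj this]
  calc ‖∑ i, y i‖ ≤ ∑ i, ‖y i‖ := norm_sum_le _ _
    _ = ∑ i, Ynorm ι (σ i) := Finset.sum_congr rfl fun i _ => (Ynorm_eq hinj (hy i)).symm

lemma Ynorm_smul (hinj : Function.Injective ι) (c : ℝ) (σ : S) :
    Ynorm ι (c • σ) = |c| * Ynorm ι σ := by
  by_cases h : ∃ y : Y, ι y = σ
  · obtain ⟨y, hy⟩ := h
    rw [Ynorm_eq hinj hy, Ynorm_eq hinj (show ι (c • y) = c • σ by rw [map_smul, hy]),
      norm_smul, Real.norm_eq_abs]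
  · by_cases hc : c = 0
    · subst hc; simp [Ynorm_zero hinj]
    · have h2 : ¬ ∃ y : Y, ι y = c • σ := by
        rintro ⟨y, hy⟩
        exact h ⟨c⁻¹ • y, by rw [map_smul, hy, smul_smul, inv_mul_cancel₀ hc, one_smul]⟩
      rw [Ynorm, dif_neg h2, Ynorm, dif_neg h]; ring

lemma Ynorm_neg (hinj : Function.Injective ι) (σ : S) : Ynorm ι (-σ) = Ynorm ι σ := by
  have := Ynorm_smul hinj (-1) σ; simpa using this

lemma Omega_zero (hq : IsOneQL ι Ω C) : Ω 0 = 0 := by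
  have := hq.1 0 0; simpa using this

lemma Omega_pair (hq : IsOneQL ι Ω C) (x z : X) :
    (∃ y : Y, ι y = Ω (x + z) - Ω x - Ω z) ∧
      Ynorm ι (Ω (x + z) - Ω x - Ω z) ≤ C * (‖x‖ + ‖z‖) := by
  have h := hq.2 2 ![x, z]
  simp only [Fin.sum_univ_two, Matrix.cons_val_zero, Matrix.cons_val_one, Matrix.head_cons] at h
  constructor
  · obtain ⟨y, hy⟩ := h.1
    exact ⟨y, by rw [hy]; abel⟩
  · have e : Ω (x + z) - (Ω x + Ω z) = Ω (x + z) - Ω x - Ω z := by abel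
    rw [← e]; exact h.2

lemma tw_zero (hq : IsOneQL ι Ω C) : ((0 : S × X)) ∈ TwSum ι Ω :=
  ⟨0, by simp [Omega_zero hq]⟩

lemma tw_add (hq : IsOneQL ι Ω C) {p q : S × X}
    (hp : p ∈ TwSum ι Ω) (hq' : q ∈ TwSum ι Ω) : p + q ∈ TwSum ι Ω := by
  obtain ⟨a, ha⟩ := hp; obtain ⟨b, hb⟩ := hq'
  obtain ⟨⟨w, hw⟩, -⟩ := Omega_pair hq p.2 q.2
  refine ⟨a + b - w, ?_⟩
  have : (p + q).1 - Ω ((p + q).2) = (p.1 - Ω p.2) + (q.1 - Ω q.2)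
      - (Ω (p.2 + q.2) - Ω p.2 - Ω q.2) := by
    simp only [Prod.fst_add, Prod.snd_add]; abel
  rw [this, ← ha, ← hb, ← hw, map_sub, map_add]

lemma tw_smul (hq : IsOneQL ι Ω C) (c : ℝ) {p : S × X}
    (hp : p ∈ TwSum ι Ω) : c • p ∈ TwSum ι Ω := by
  obtain ⟨a, ha⟩ := hp
  refine ⟨c • a, ?_⟩
  have : (c • p).1 - Ω ((c • p).2) = c • (p.1 - Ω p.2) := by
    simp only [Prod.smul_fst, Prod.smul_snd, hq.1 c p.2, smul_sub]
  rw [this, ← ha, map_smul]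

lemma tnorm_nonneg (ι : Y →ₗ[ℝ] S) (Ω : X → S) (p : S × X) : 0 ≤ tnorm ι Ω p :=
  add_nonneg (Ynorm_nonneg _ _) (norm_nonneg _)

lemma tnorm_smul (hinj : Function.Injective ι) (hq : IsOneQL ι Ω C) (c : ℝ) (p : S × X) :
    tnorm ι Ω (c • p) = |c| * tnorm ι Ω p := by
  have : (c • p).1 - Ω ((c • p).2) = c • (p.1 - Ω p.2) := by
    simp only [Prod.smul_fst, Prod.smul_snd, hq.1 c p.2, smul_sub]
  rw [tnorm, tnorm, this, Ynorm_smul hinj, Prod.smul_snd, norm_smul, Real.norm_eq_abs]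
  ring

end Aux

section Envelope

variable {X Y S : Type*} [NormedAddCommGroup X] [NormedSpace ℝ X]
  [NormedAddCommGroup Y] [NormedSpace ℝ Y] [AddCommGroup S] [Module ℝ S]

/-- Set of total `tnorm`-costs of decompositions of `t` into twisted-sum elements. -/
def Dec (ι : Y →ₗ[ℝ] S) (Ω : X → S) (t : S × X) : Set ℝ :=
  {r | ∃ (n : ℕ) (q : Fin n → S × X), (∀ i, q i ∈ TwSum ι Ω) ∧
    (∑ i, q i) = t ∧ (∑ i, tnorm ι Ω (q i)) = r}

noncomputable def pEnv (ι : Y →ₗ[ℝ] S) (Ω : X → S) (t : S × X) : ℝ :=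
  sInf (Dec ι Ω t)

variable {ι : Y →ₗ[ℝ] S} {Ω : X → S} {C : ℝ}

lemma Dec_nonneg {t : S × X} {r : ℝ} (hr : r ∈ Dec ι Ω t) : 0 ≤ r := by
  obtain ⟨n, q, -, -, hsum⟩ := hr
  rw [← hsum]
  exact Finset.sum_nonneg fun i _ => tnorm_nonneg ι Ω (q i)

lemma Dec_bddBelow (t : S × X) : BddBelow (Dec ι Ω t) :=
  ⟨0, fun _ hr => Dec_nonneg hr⟩

lemma Dec_self {t : S × X} (ht : t ∈ TwSum ι Ω) : tnorm ι Ω t ∈ Dec ι Ω t :=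
  ⟨1, fun _ => t, fun _ => ht, by simp, by simp⟩

lemma Dec_nonempty {t : S × X} (ht : t ∈ TwSum ι Ω) : (Dec ι Ω t).Nonempty :=
  ⟨_, Dec_self ht⟩

lemma pEnv_nonneg (t : S × X) : 0 ≤ pEnv ι Ω t :=
  Real.sInf_nonneg fun _ hr => Dec_nonneg hr

lemma pEnv_le_tnorm {t : S × X} (ht : t ∈ TwSum ι Ω) : pEnv ι Ω t ≤ tnorm ι Ω t :=
  csInf_le (Dec_bddBelow t) (Dec_self ht)

lemma Dec_add {t u : S × X} {r s : ℝ} (hr : r ∈ Dec ι Ω t) (hs : s ∈ Dec ι Ω u) :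
    r + s ∈ Dec ι Ω (t + u) := by
  obtain ⟨n, q, hmem, hq, hc⟩ := hr
  obtain ⟨m, q', hmem', hq', hc'⟩ := hs
  refine ⟨n + m, Fin.append q q', ?_, ?_, ?_⟩
  · intro i
    refine Fin.addCases (fun j => ?_) (fun j => ?_) i
    · rw [Fin.append_left]; exact hmem j
    · rw [Fin.append_right]; exact hmem' j
  · rw [Fin.sum_univ_add]
    simp only [Fin.append_left, Fin.append_right, hq, hq']
  · rw [Fin.sum_univ_add]
    simp only [Fin.append_left, Fin.append_right, hc, hc']

lemma pEnv_add_le (hq : IsOneQL ι Ω C) {t u : S × X}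
    (ht : t ∈ TwSum ι Ω) (hu : u ∈ TwSum ι Ω) :
    pEnv ι Ω (t + u) ≤ pEnv ι Ω t + pEnv ι Ω u := by
  have key : ∀ r ∈ Dec ι Ω t, ∀ s ∈ Dec ι Ω u, pEnv ι Ω (t + u) ≤ r + s :=
    fun r hr s hs => csInf_le (Dec_bddBelow _) (Dec_add hr hs)
  have h1 : ∀ s ∈ Dec ι Ω u, pEnv ι Ω (t + u) - s ≤ pEnv ι Ω t := fun s hs =>
    le_csInf (Dec_nonempty ht) fun r hr => by linarith [key r hr s hs]
  have h2 : pEnv ι Ω (t + u) - pEnv ι Ω t ≤ pEnv ι Ω u :=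
    le_csInf (Dec_nonempty hu) fun s hs => by linarith [h1 s hs]
  linarith

lemma Dec_smul (hinj : Function.Injective ι) (hq : IsOneQL ι Ω C) (c : ℝ) {t : S × X}
    {r : ℝ} (hr : r ∈ Dec ι Ω t) : |c| * r ∈ Dec ι Ω (c • t) := by
  obtain ⟨n, q, hmem, hqs, hc⟩ := hr
  refine ⟨n, fun i => c • q i, fun i => tw_smul hq c (hmem i), ?_, ?_⟩
  · rw [← Finset.smul_sum, hqs]
  · rw [← hc, Finset.mul_sum]
    exact Finset.sum_congr rfl fun i _ => tnorm_smul hinj hq c (q i)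

lemma pEnv_smul_le (hinj : Function.Injective ι) (hq : IsOneQL ι Ω C) {c : ℝ} (hc : 0 < c)
    {t : S × X} (ht : t ∈ TwSum ι Ω) : pEnv ι Ω (c • t) ≤ c * pEnv ι Ω t := by
  have h1 : ∀ r ∈ Dec ι Ω t, pEnv ι Ω (c • t) / c ≤ r := by
    intro r hr
    rw [div_le_iff₀ hc]
    have := csInf_le (Dec_bddBelow (c • t)) (Dec_smul hinj hq c hr)
    rwa [abs_of_pos hc, mul_comm] at this
  have h2 : pEnv ι Ω (c • t) / c ≤ pEnv ι Ω t := le_csInf (Dec_nonempty ht) h1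
  calc pEnv ι Ω (c • t) = c * (pEnv ι Ω (c • t) / c) := by field_simp
    _ ≤ c * pEnv ι Ω t := by exact mul_le_mul_of_nonneg_left h2 hc.le

lemma pEnv_smul (hinj : Function.Injective ι) (hq : IsOneQL ι Ω C) {c : ℝ} (hc : 0 < c)
    {t : S × X} (ht : t ∈ TwSum ι Ω) : pEnv ι Ω (c • t) = c * pEnv ι Ω t := by
  refine le_antisymm (pEnv_smul_le hinj hq hc ht) ?_
  have h := pEnv_smul_le hinj hq (inv_pos.mpr hc) (tw_smul hq c ht)
  rw [smul_smul, inv_mul_cancel₀ hc.ne', one_smul] at h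
  calc c * pEnv ι Ω t ≤ c * (c⁻¹ * pEnv ι Ω (c • t)) := mul_le_mul_of_nonneg_left h hc.le
    _ = pEnv ι Ω (c • t) := by field_simp

lemma pEnv_neg (hinj : Function.Injective ι) (hq : IsOneQL ι Ω C)
    {t : S × X} (ht : t ∈ TwSum ι Ω) : pEnv ι Ω (-t) = pEnv ι Ω t := by
  have key : ∀ u : S × X, u ∈ TwSum ι Ω → pEnv ι Ω (-u) ≤ pEnv ι Ω u := by
    intro u hu
    refine le_csInf (Dec_nonempty hu) fun r hr => ?_
    have := Dec_smul hinj hq (-1) hr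
    simp only [abs_neg, abs_one, one_mul, neg_one_smul] at this
    exact csInf_le (Dec_bddBelow _) this
  have h1 := key t ht
  have h2 := key (-t) (by simpa using tw_smul hq (-1) ht)
  rw [neg_neg] at h2
  linarith

end Envelope

section Key

variable {X Y S : Type*} [NormedAddCommGroup X] [NormedSpace ℝ X]
  [NormedAddCommGroup Y] [NormedSpace ℝ Y] [AddCommGroup S] [Module ℝ S]
  {ι : Y →ₗ[ℝ] S} {Ω : X → S} {C : ℝ}

lemma key_ineq (hinj : Function.Injective ι) (hq : IsOneQL ι Ω C) {x : X}
    {r : ℝ} (hr : r ∈ Dec ι Ω ((0 : S), x)) :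
    domNorm ι Ω x ≤ (2 + max C 0) * r := by
  obtain ⟨n, q, hmem, hqs, hc⟩ := hr
  set xs : Fin n → X := fun i => (q i).2 with hxs
  set βs : Fin n → S := fun i => (q i).1 with hβs
  have hsx : ∑ i, xs i = x := by
    have := congrArg Prod.snd hqs
    simpa [Prod.snd_sum] using this
  have hsβ : ∑ i, βs i = 0 := by
    have := congrArg Prod.fst hqs
    simpa [Prod.fst_sum] using this
  obtain ⟨hA, hYA⟩ := hq.2 n xs
  rw [hsx] at hA hYA
  -- decomposition of Ω x
  have hBex : ∀ i, ∃ y : Y, ι y = Ω (xs i) - βs i := by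
    intro i
    obtain ⟨y, hy⟩ := hmem i
    exact ⟨-y, by rw [map_neg, hy]; abel⟩
  have hBex' : ∃ y : Y, ι y = ∑ i, (Ω (xs i) - βs i) := by
    choose y hy using hBex
    exact ⟨∑ i, y i, by rw [map_sum]; exact Finset.sum_congr rfl fun i _ => hy i⟩
  have hdecomp : Ω x = (Ω x - ∑ i, Ω (xs i)) + ∑ i, (Ω (xs i) - βs i) := by
    rw [Finset.sum_sub_distrib, hsβ]; abel
  have hYB : Ynorm ι (∑ i, (Ω (xs i) - βs i)) ≤ ∑ i, Ynorm ι (βs i - Ω (xs i)) := by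
    refine (Ynorm_sum_le hinj hBex).trans ?_
    refine le_of_eq (Finset.sum_congr rfl fun i _ => ?_)
    rw [show Ω (xs i) - βs i = -(βs i - Ω (xs i)) by abel, Ynorm_neg hinj]
  have hYx : Ynorm ι (Ω x) ≤ C * ∑ i, ‖xs i‖ + ∑ i, Ynorm ι (βs i - Ω (xs i)) := by
    rw [hdecomp]
    exact (Ynorm_add_le hinj hA hBex').trans (add_le_add hYA hYB)
  have hxn : ‖x‖ ≤ ∑ i, ‖xs i‖ := by
    rw [← hsx]; exact norm_sum_le _ _
  have hrval : r = ∑ i, Ynorm ι (βs i - Ω (xs i)) + ∑ i, ‖xs i‖ := by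
    rw [← hc, ← Finset.sum_add_distrib]; rfl
  set a := ∑ i, ‖xs i‖ with ha
  set b := ∑ i, Ynorm ι (βs i - Ω (xs i)) with hb
  have ha0 : 0 ≤ a := Finset.sum_nonneg fun i _ => norm_nonneg _
  have hb0 : 0 ≤ b := Finset.sum_nonneg fun i _ => Ynorm_nonneg _ _
  have hC0 : 0 ≤ max C 0 := le_max_right _ _
  have hCa : C * a ≤ max C 0 * a := mul_le_mul_of_nonneg_right (le_max_left _ _) ha0
  rw [domNorm, hrval]
  nlinarith [mul_nonneg hC0 hb0, mul_nonneg hC0 ha0]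

/-- The twisted sum as a submodule of `S × X`. -/
def twSubmodule (ι : Y →ₗ[ℝ] S) (Ω : X → S) {C : ℝ} (hq : IsOneQL ι Ω C) :
    Submodule ℝ (S × X) where
  carrier := TwSum ι Ω
  add_mem' := fun hp hq' => tw_add hq hp hq'
  zero_mem' := tw_zero hq
  smul_mem' := fun c _ hp => tw_smul hq c hp

end Key

section Part2

variable {X Y S : Type*} [NormedAddCommGroup X] [NormedSpace ℝ X]
  [NormedAddCommGroup Y] [NormedSpace ℝ Y] [AddCommGroup S] [Module ℝ S]
  {ι : Y →ₗ[ℝ] S} {Ω : X → S} {C : ℝ}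

lemma part2_main (hinj : Function.Injective ι) (hq : IsOneQL ι Ω C)
    (B : (Y →L[ℝ] ℝ) → (S × X →ₗ[ℝ] ℝ)) (K : ℝ) (hK : 0 < K)
    (hBsel : ∀ (g : Y →L[ℝ] ℝ) (y : Y), B g (ι y, (0 : X)) = g y)
    (hBbdd : ∀ (g : Y →L[ℝ] ℝ), ∀ p ∈ TwSum ι Ω, |B g p| ≤ K * ‖g‖ * tnorm ι Ω p)
    (α : X →ₗ[ℝ] ℝ) (Mα : ℝ) (hα : ∀ x ∈ QDom ι Ω, |α x| ≤ Mα * domNorm ι Ω x) :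
    ∃ g : Y →L[ℝ] ℝ, ∃ M : ℝ, ∀ x ∈ QDom ι Ω,
      |α x - B g ((0 : S), x)| ≤ M * ‖x‖ := by
  classical
  set C0 := max C 0 with hC0def
  set M0 := max Mα 0 with hM0def
  set M := M0 * (2 + C0) with hMdef
  have hC00 : (0:ℝ) ≤ C0 := le_max_right _ _
  have hC0pos : (0:ℝ) < 2 + C0 := by linarith
  have hM00 : (0:ℝ) ≤ M0 := le_max_right _ _
  have hM : (0:ℝ) ≤ M := mul_nonneg hM00 hC0pos.le
  set T := twSubmodule ι Ω hq with hTdef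
  have hTmem : ∀ t : T, (t : S × X) ∈ TwSum ι Ω := fun t => t.2
  -- the subspace {(0, x)} of the twisted sum
  set V : Submodule ℝ T :=
    Submodule.comap T.subtype ((⊥ : Submodule ℝ S).prod ⊤) with hVdef
  have hVmem : ∀ v : T, v ∈ V ↔ (v : S × X).1 = 0 := by
    intro v
    simp [hVdef, Submodule.mem_comap, Submodule.mem_prod]
  set flin : V →ₗ[ℝ] ℝ :=
    α.comp ((LinearMap.snd ℝ S X).comp (T.subtype.comp V.subtype)) with hflin
  set f : (T →ₗ.[ℝ] ℝ) := ⟨V, flin⟩ with hf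
  set N : T → ℝ := fun t => M * pEnv ι Ω (t : S × X) with hN
  -- key bound : domNorm ≤ (2+C0) * pEnv (0,x)
  have hkey : ∀ x : X, ((0 : S), x) ∈ TwSum ι Ω →
      domNorm ι Ω x ≤ (2 + C0) * pEnv ι Ω ((0 : S), x) := by
    intro x hx
    have h1 : ∀ r ∈ Dec ι Ω ((0 : S), x), domNorm ι Ω x / (2 + C0) ≤ r := by
      intro r hr
      rw [div_le_iff₀ hC0pos]
      have := key_ineq hinj hq hr
      linarith [this]
    have h2 : domNorm ι Ω x / (2 + C0) ≤ pEnv ι Ω ((0 : S), x) :=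
      le_csInf (Dec_nonempty hx) h1
    calc domNorm ι Ω x = (2 + C0) * (domNorm ι Ω x / (2 + C0)) := by field_simp
      _ ≤ (2 + C0) * pEnv ι Ω ((0 : S), x) := by
          exact mul_le_mul_of_nonneg_left h2 hC0pos.le
  have hdom_nonneg : ∀ x : X, 0 ≤ domNorm ι Ω x :=
    fun x => add_nonneg (norm_nonneg _) (Ynorm_nonneg _ _)
  -- Hahn-Banach
  obtain ⟨F, hFe, hFle⟩ :=
    exists_extension_of_le_sublinear f N
      (fun c hc t => by
        have : ((c • t : T) : S × X) = c • (t : S × X) := rfl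
        simp only [hN, this, pEnv_smul hinj hq hc (hTmem t)]
        ring)
      (fun t u => by
        have : ((t + u : T) : S × X) = (t : S × X) + (u : S × X) := rfl
        simp only [hN, this]
        calc M * pEnv ι Ω ((t : S × X) + (u : S × X))
            ≤ M * (pEnv ι Ω (t : S × X) + pEnv ι Ω (u : S × X)) :=
              mul_le_mul_of_nonneg_left (pEnv_add_le hq (hTmem t) (hTmem u)) hM
          _ = M * pEnv ι Ω (t : S × X) + M * pEnv ι Ω (u : S × X) := by ring)
      (fun v => by
        -- f v = α x ≤ N v
        obtain ⟨⟨⟨β, x⟩, htw⟩, hv⟩ := v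
        have hβ : β = 0 := by
          have := (hVmem ⟨(β, x), htw⟩).mp hv
          simpa using this
        subst hβ
        have hxdom : x ∈ QDom ι Ω := by
          obtain ⟨y, hy⟩ := htw
          exact ⟨-y, by rw [map_neg, hy]; simp⟩
        have h1 : α x ≤ M0 * domNorm ι Ω x :=
          (le_abs_self _).trans ((hα x hxdom).trans
            (mul_le_mul_of_nonneg_right (le_max_left _ _) (hdom_nonneg x)))
        have h2 : M0 * domNorm ι Ω x ≤ M * pEnv ι Ω ((0 : S), x) := by
          rw [hMdef, mul_assoc]
          exact mul_le_mul_of_nonneg_left (hkey x htw) hM00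
        exact h1.trans h2)
  have habs : ∀ t : T, |F t| ≤ N t := by
    intro t
    rw [abs_le]
    refine ⟨?_, hFle t⟩
    have h1 : F (-t) ≤ N (-t) := hFle (-t)
    have h2 : N (-t) = N t := by
      have : ((-t : T) : S × X) = -(t : S × X) := rfl
      simp only [hN, this, pEnv_neg hinj hq (hTmem t)]
    rw [map_neg, h2] at h1
    linarith
  -- the functional g on Y
  have hyt : ∀ y : Y, (ι y, (0 : X)) ∈ TwSum ι Ω :=
    fun y => ⟨y, by simp [Omega_zero hq]⟩
  set g0 : Y →ₗ[ℝ] ℝ :=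
    { toFun := fun y => F ⟨(ι y, 0), hyt y⟩
      map_add' := fun y z => by
        show F ⟨(ι (y + z), 0), hyt _⟩ = F ⟨(ι y, 0), hyt _⟩ + F ⟨(ι z, 0), hyt _⟩
        rw [← map_add F]
        congr 1
        apply Subtype.ext
        simp [Prod.ext_iff]
      map_smul' := fun c y => by
        show F ⟨(ι (c • y), 0), hyt _⟩ = c • F ⟨(ι y, 0), hyt _⟩
        rw [← map_smul F]
        congr 1
        apply Subtype.ext
        simp [Prod.ext_iff] } with hg0
  have htn : ∀ y : Y, tnorm ι Ω (ι y, (0 : X)) = ‖y‖ := by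
    intro y
    rw [tnorm]
    simp [Omega_zero hq, Ynorm_eq hinj (rfl : ι y = ι y)]
  have gb : ∀ y : Y, ‖g0 y‖ ≤ M * ‖y‖ := by
    intro y
    have h1 : |F ⟨(ι y, 0), hyt y⟩| ≤ N ⟨(ι y, 0), hyt y⟩ := habs _
    have h2 : N ⟨(ι y, 0), hyt y⟩ ≤ M * ‖y‖ := by
      rw [hN, ← htn y]
      exact mul_le_mul_of_nonneg_left (pEnv_le_tnorm (hyt y)) hM
    simpa [hg0, Real.norm_eq_abs] using h1.trans h2
  set g : Y →L[ℝ] ℝ := g0.mkContinuous M gb with hg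
  have hgnorm : ‖g‖ ≤ M := g0.mkContinuous_norm_le hM gb
  have hgapp : ∀ y : Y, g y = F ⟨(ι y, 0), hyt y⟩ := fun y => rfl
  refine ⟨g, M + K * M, ?_⟩
  intro x hx
  obtain ⟨y, hy⟩ := hx
  have t0 : ((0 : S), x) ∈ TwSum ι Ω := ⟨-y, by rw [map_neg, hy]; simp⟩
  have t1 : (Ω x, x) ∈ TwSum ι Ω := ⟨0, by simp⟩
  -- α x = F (0, x)
  have hvV : (⟨((0 : S), x), t0⟩ : T) ∈ V := (hVmem _).mpr rfl
  have e0 : F ⟨((0 : S), x), t0⟩ = α x := hFe ⟨⟨((0 : S), x), t0⟩, hvV⟩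
  -- split (0, x) = (Ωx, x) + (ι(-y), 0)
  have esplit : (⟨((0 : S), x), t0⟩ : T)
      = ⟨(Ω x, x), t1⟩ + ⟨(ι (-y), 0), hyt (-y)⟩ := by
    apply Subtype.ext
    have : ι (-y) = -Ω x := by rw [map_neg, hy]
    simp [Prod.ext_iff, this]
  have e1 : α x = F ⟨(Ω x, x), t1⟩ - g y := by
    rw [← e0, esplit, map_add]
    have : F ⟨(ι (-y), 0), hyt (-y)⟩ = g (-y) := (hgapp (-y)).symm
    rw [this, map_neg]
    ring
  -- split B g (0, x)
  have e2 : B g ((0 : S), x) = B g (Ω x, x) - g y := by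
    have harg : ((0 : S), x) = (Ω x, x) + (-(ι y, (0 : X))) := by
      simp [Prod.ext_iff, hy]
    rw [harg, map_add, map_neg, hBsel g y]
    ring
  have e3 : α x - B g ((0 : S), x) = F ⟨(Ω x, x), t1⟩ - B g (Ω x, x) := by
    rw [e1, e2]; ring
  have htn1 : tnorm ι Ω (Ω x, x) = ‖x‖ := by
    rw [tnorm]; simp [Ynorm_zero hinj]
  have hb1 : |F ⟨(Ω x, x), t1⟩| ≤ M * ‖x‖ := by
    refine (habs _).trans ?_
    rw [hN, ← htn1]
    exact mul_le_mul_of_nonneg_left (pEnv_le_tnorm t1) hM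
  have hb2 : |B g (Ω x, x)| ≤ K * M * ‖x‖ := by
    refine (hBbdd g _ t1).trans ?_
    rw [htn1]
    have : K * ‖g‖ ≤ K * M := mul_le_mul_of_nonneg_left hgnorm hK.le
    exact mul_le_mul_of_nonneg_right this (norm_nonneg _)
  calc |α x - B g ((0 : S), x)| = |F ⟨(Ω x, x), t1⟩ - B g (Ω x, x)| := by rw [e3]
    _ ≤ |F ⟨(Ω x, x), t1⟩| + |B g (Ω x, x)| := abs_sub _ _
    _ ≤ M * ‖x‖ + K * M * ‖x‖ := add_le_add hb1 hb2
    _ = (M + K * M) * ‖x‖ := by ring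

end Part2

/-- Let `Ω : X ↷ Y` be `1`-quasilinear with dense domain and `Ω*` its
adjoint (`Ω* y* := x ↦ B y* (0, x)` for a bounded homogeneous selection `B` of `ι₁*`).
Then `Ran Ω* = (Dom Ω)*` and `Dom Ω* = (Ran Ω)*`. Elements of `(Dom Ω)*` are
represented as linear functionals on `X` bounded w.r.t. `‖·‖_D` on `Dom Ω`; elements
of `(Ran Ω)*` are, via the dense embedding `Y ↪ Ran Ω`, exactly the `y* ∈ Y*` bounded
with respect to `‖·‖_R`. -/
theorem stmt13 {X Y S : Type*} [NormedAddCommGroup X] [NormedSpace ℝ X] [CompleteSpace X]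
    [NormedAddCommGroup Y] [NormedSpace ℝ Y] [CompleteSpace Y]
    [AddCommGroup S] [Module ℝ S]
    (ι : Y →ₗ[ℝ] S) (hinj : Function.Injective ι)
    (Ω : X → S) (C : ℝ) (hq : IsOneQL ι Ω C)
    (hdense : ∀ x : X, ∀ ε > (0 : ℝ), ∃ z ∈ QDom ι Ω, ‖x - z‖ < ε)
    (B : (Y →L[ℝ] ℝ) → (S × X →ₗ[ℝ] ℝ)) (K : ℝ) (hK : 0 < K)
    (hBhom : ∀ (c : ℝ) (g : Y →L[ℝ] ℝ), B (c • g) = c • B g)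
    (hBsel : ∀ (g : Y →L[ℝ] ℝ) (y : Y), B g (ι y, (0 : X)) = g y)
    (hBbdd : ∀ (g : Y →L[ℝ] ℝ), ∀ p ∈ TwSum ι Ω, |B g p| ≤ K * ‖g‖ * tnorm ι Ω p) :
    -- Ran Ω* ⊆ (Dom Ω)* : each Ω* g is bounded w.r.t. ‖·‖_D
    (∀ g : Y →L[ℝ] ℝ, ∃ M : ℝ, ∀ x ∈ QDom ι Ω,
      |B g ((0 : S), x)| ≤ M * domNorm ι Ω x) ∧
    -- (Dom Ω)* ⊆ Ran Ω* : every α ∈ (Dom Ω)* is Ω* g + (an element of X*) for some g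
    (∀ α : X →ₗ[ℝ] ℝ, (∃ Mα : ℝ, ∀ x ∈ QDom ι Ω, |α x| ≤ Mα * domNorm ι Ω x) →
      ∃ g : Y →L[ℝ] ℝ, ∃ M : ℝ, ∀ x ∈ QDom ι Ω,
        |α x - B g ((0 : S), x)| ≤ M * ‖x‖) ∧
    -- Dom Ω* = (Ran Ω)* : g ∈ Dom Ω* iff g is bounded w.r.t. the range quasinorm
    (∀ g : Y →L[ℝ] ℝ,
      (∃ M : ℝ, ∀ x ∈ QDom ι Ω, |B g ((0 : S), x)| ≤ M * ‖x‖) ↔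
      (∃ M : ℝ, ∀ y : Y, |g y| ≤ M * ranNorm ι Ω (ι y))) := by
  refine ⟨?_, ?_, ?_⟩
  · -- Part 1: Ran Ω* ⊆ (Dom Ω)*
    intro g
    refine ⟨K * ‖g‖, ?_⟩
    intro x hx
    obtain ⟨y, hy⟩ := hx
    have t0 : ((0 : S), x) ∈ TwSum ι Ω := ⟨-y, by rw [map_neg, hy]; simp⟩
    have h := hBbdd g _ t0
    have htn : tnorm ι Ω ((0 : S), x) = domNorm ι Ω x := by
      rw [tnorm, domNorm, zero_sub, Ynorm_neg hinj]; ring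
    rwa [htn] at h
  · -- Part 2: (Dom Ω)* ⊆ Ran Ω*
    rintro α ⟨Mα, hα⟩
    exact part2_main hinj hq B K hK hBsel hBbdd α Mα hα
  · -- Part 3: Dom Ω* = (Ran Ω)*
    intro g
    constructor
    · rintro ⟨M, hM⟩
      set c := K * ‖g‖ + max M 0 + 1 with hcdef
      have hc0 : 0 < c := by
        have := mul_nonneg hK.le (norm_nonneg g)
        have := le_max_right M 0
        rw [hcdef]; linarith
      refine ⟨c, fun y => ?_⟩
      have hmem0 : tnorm ι Ω (ι y, (0 : X))
          ∈ tnorm ι Ω '' {p : S × X | p.1 = ι y ∧ p ∈ TwSum ι Ω} :=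
        ⟨(ι y, 0), ⟨rfl, ⟨y, by simp [Omega_zero hq]⟩⟩, rfl⟩
      have hbound : ∀ r ∈ tnorm ι Ω '' {p : S × X | p.1 = ι y ∧ p ∈ TwSum ι Ω},
          |g y| / c ≤ r := by
        rintro r ⟨p, ⟨hp1, hp2⟩, rfl⟩
        set x := p.2 with hx
        have hpx : p = (ι y, x) := by rw [← hp1]
        have hxdom : x ∈ QDom ι Ω := by
          obtain ⟨y', hy'⟩ := hp2
          rw [hpx] at hy'
          exact ⟨y - y', by rw [map_sub, hy']; simp⟩
        have e1 : g y = B g p - B g ((0 : S), x) := by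
          have harg : p = ((0 : S), x) + (ι y, (0 : X)) := by
            rw [hpx]; simp [Prod.ext_iff]
          rw [harg, map_add, hBsel g y]; ring
        have hx_le : ‖x‖ ≤ tnorm ι Ω p := by
          rw [tnorm, ← hx]
          have := Ynorm_nonneg ι (p.1 - Ω p.2)
          linarith
        have h1 : |B g p| ≤ K * ‖g‖ * tnorm ι Ω p := hBbdd g p hp2
        have h2 : |B g ((0 : S), x)| ≤ max M 0 * tnorm ι Ω p := by
          refine (hM x hxdom).trans ?_
          have ha : M * ‖x‖ ≤ max M 0 * ‖x‖ :=
            mul_le_mul_of_nonneg_right (le_max_left _ _) (norm_nonneg _)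
          have hb : max M 0 * ‖x‖ ≤ max M 0 * tnorm ι Ω p :=
            mul_le_mul_of_nonneg_left hx_le (le_max_right _ _)
          linarith
        have h3 : |g y| ≤ c * tnorm ι Ω p := by
          rw [e1, hcdef]
          have := abs_sub (B g p) (B g ((0 : S), x))
          have htp := tnorm_nonneg ι Ω p
          nlinarith
        rw [div_le_iff₀ hc0]
        linarith [h3]
      have h2 : |g y| / c ≤ ranNorm ι Ω (ι y) :=
        le_csInf ⟨_, hmem0⟩ hbound
      calc |g y| = c * (|g y| / c) := by field_simp
        _ ≤ c * ranNorm ι Ω (ι y) := mul_le_mul_of_nonneg_left h2 hc0.le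
    · rintro ⟨M, hM⟩
      refine ⟨K * ‖g‖ + max M 0, ?_⟩
      intro x hx
      obtain ⟨y, hy⟩ := hx
      have t1 : (Ω x, x) ∈ TwSum ι Ω := ⟨0, by simp⟩
      have e2 : B g ((0 : S), x) = B g (Ω x, x) - g y := by
        have harg : ((0 : S), x) = (Ω x, x) + (-(ι y, (0 : X))) := by
          simp [Prod.ext_iff, hy]
        rw [harg, map_add, map_neg, hBsel g y]; ring
      have hbb : BddBelow (tnorm ι Ω '' {p : S × X | p.1 = ι y ∧ p ∈ TwSum ι Ω}) := by
        refine ⟨0, ?_⟩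
        rintro r ⟨p, -, rfl⟩
        exact tnorm_nonneg ι Ω p
      have hmem : tnorm ι Ω (ι y, x)
          ∈ tnorm ι Ω '' {p : S × X | p.1 = ι y ∧ p ∈ TwSum ι Ω} :=
        ⟨(ι y, x), ⟨rfl, ⟨0, by simp [hy]⟩⟩, rfl⟩
      have htnx : tnorm ι Ω (ι y, x) = ‖x‖ := by
        rw [tnorm]
        simp [hy, Ynorm_zero hinj]
      have hr1 : ranNorm ι Ω (ι y) ≤ ‖x‖ := by
        rw [← htnx]
        exact csInf_le hbb hmem
      have hr0 : 0 ≤ ranNorm ι Ω (ι y) := by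
        refine Real.sInf_nonneg ?_
        rintro r ⟨p, -, rfl⟩
        exact tnorm_nonneg ι Ω p
      have hgy : |g y| ≤ max M 0 * ‖x‖ := by
        refine (hM y).trans ?_
        have ha : M * ranNorm ι Ω (ι y) ≤ max M 0 * ranNorm ι Ω (ι y) :=
          mul_le_mul_of_nonneg_right (le_max_left _ _) hr0
        have hb : max M 0 * ranNorm ι Ω (ι y) ≤ max M 0 * ‖x‖ :=
          mul_le_mul_of_nonneg_left hr1 (le_max_right _ _)
        linarith
      have htn1 : tnorm ι Ω (Ω x, x) = ‖x‖ := by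
        rw [tnorm]; simp [Ynorm_zero hinj]
      have hb2 : |B g (Ω x, x)| ≤ K * ‖g‖ * ‖x‖ := by
        have := hBbdd g _ t1
        rwa [htn1] at this
      calc |B g ((0 : S), x)| = |B g (Ω x, x) - g y| := by rw [e2]
        _ ≤ |B g (Ω x, x)| + |g y| := abs_sub _ _
        _ ≤ K * ‖g‖ * ‖x‖ + max M 0 * ‖x‖ := add_le_add hb2 hgy
        _ = (K * ‖g‖ + max M 0) * ‖x‖ := by ring
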